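/- Call-by-name simulation of the λμ-calculus by the λ̄μμ̃-calculus: if a λμ-term (or command) t reduces to v by one call-by-name λμ-reduction step, then there exists a λ̄μμ̃-term (or command) u such that t† reduces to u by zero or more call-by-name λ̄μμ̃-reduction steps and v† reduces to u by zero or more linear call-by-name λ̄μμ̃-reduction steps. -/

import Mathlib

set_option autoImplicit true

namespace CHSim

/-- Lift a de Bruijn renaming under a binder. -/
def upr (ξ : ℕ → ℕ) : ℕ → ℕ
  | 0 => 0
  | k+1 => ξ k + 1

/-! ## The λμ-calculus (de Bruijn representation).

λ-variables and μ-variables each have their own name space of de Bruijn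
indices.  `abs t` is `λx.t` (binding λ-index 0) and `mabs c` is `μα.c`
(binding μ-index 0); `cmd a t` is the command `[a]t`. -/

mutual
  inductive Tm : Type
    | var : ℕ → Tm
    | abs : Tm → Tm
    | app : Tm → Tm → Tm
    | mabs : Cm → Tm
  inductive Cm : Type
    | cmd : ℕ → Tm → Cm
end

/-- λμ-contexts `e ::= ⟨α⟩ | ⟨β⟩(t ·) | e · t`. -/
inductive Ct : Type
  | cvar : ℕ → Ct
  | push : ℕ → Tm → Ct
  | cons : Ct → Tm → Ct

/-- Filling a λμ-context with a term: `⟨α⟩⟨t⟩ = [α]t`,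
`(⟨β⟩(u ·))⟨t⟩ = [β](u t)`, `(h · u)⟨t⟩ = h⟨t u⟩`. -/
def fill : Ct → Tm → Cm
  | .cvar a, t => .cmd a t
  | .push b u, t => .cmd b (.app u t)
  | .cons h u, t => fill h (.app t u)

mutual
  /-- Renaming of λ-variables in λμ-terms. -/
  def renLT (ξ : ℕ → ℕ) : Tm → Tm
    | .var x => .var (ξ x)
    | .abs t => .abs (renLT (upr ξ) t)
    | .app t u => .app (renLT ξ t) (renLT ξ u)
    | .mabs c => .mabs (renLC ξ c)
  /-- Renaming of λ-variables in λμ-commands. -/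
  def renLC (ξ : ℕ → ℕ) : Cm → Cm
    | .cmd a t => .cmd a (renLT ξ t)
end

mutual
  /-- Renaming of μ-variables in λμ-terms. -/
  def renMT (ξ : ℕ → ℕ) : Tm → Tm
    | .var x => .var x
    | .abs t => .abs (renMT ξ t)
    | .app t u => .app (renMT ξ t) (renMT ξ u)
    | .mabs c => .mabs (renMC (upr ξ) c)
  /-- Renaming of μ-variables in λμ-commands. -/
  def renMC (ξ : ℕ → ℕ) : Cm → Cm
    | .cmd a t => .cmd (ξ a) (renMT ξ t)
end

/-- Renaming of λ-variables in λμ-contexts. -/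
def renLE (ξ : ℕ → ℕ) : Ct → Ct
  | .cvar a => .cvar a
  | .push b t => .push b (renLT ξ t)
  | .cons e t => .cons (renLE ξ e) (renLT ξ t)

/-- Renaming of μ-variables in λμ-contexts. -/
def renME (ξ : ℕ → ℕ) : Ct → Ct
  | .cvar a => .cvar (ξ a)
  | .push b t => .push (ξ b) (renMT ξ t)
  | .cons e t => .cons (renME ξ e) (renMT ξ t)

/-- Lifting a λ-substitution under a λ-binder. -/
def upsL (σ : ℕ → Tm) : ℕ → Tm
  | 0 => .var 0
  | k+1 => renLT Nat.succ (σ k)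

mutual
  /-- (Capture-avoiding) substitution for λ-variables in λμ-terms. -/
  def lsubT (σ : ℕ → Tm) : Tm → Tm
    | .var x => σ x
    | .abs t => .abs (lsubT (upsL σ) t)
    | .app t u => .app (lsubT σ t) (lsubT σ u)
    | .mabs c => .mabs (lsubC (fun k => renMT Nat.succ (σ k)) c)
  /-- Substitution for λ-variables in λμ-commands. -/
  def lsubC (σ : ℕ → Tm) : Cm → Cm
    | .cmd a t => .cmd a (lsubT σ t)
end

/-- Substitution for λ-variables in λμ-contexts. -/
def lsubE (σ : ℕ → Tm) : Ct → Ct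
  | .cvar a => .cvar a
  | .push b t => .push b (lsubT σ t)
  | .cons e t => .cons (lsubE σ e) (lsubT σ t)

/-- The substitution replacing the λ-variable `x` by `u`. -/
def sub1L (x : ℕ) (u : Tm) : ℕ → Tm := fun k => if k = x then u else .var k

/-- The β-substitution replacing the bound λ-variable 0 by `u`. -/
def sub0L (u : Tm) : ℕ → Tm
  | 0 => u
  | k+1 => .var k

/-- Lifting a structural (μ-)substitution under a μ-binder. -/
def upsM (σ : ℕ → Ct) : ℕ → Ct
  | 0 => .cvar 0
  | k+1 => renME Nat.succ (σ k)

mutual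
  /-- Structural substitution of λμ-contexts for μ-variables in λμ-terms:
  every subcommand `[α]u` is replaced by `(σ α)⟨u[σ]⟩`. -/
  def msubT (σ : ℕ → Ct) : Tm → Tm
    | .var x => .var x
    | .abs t => .abs (msubT (fun k => renLE Nat.succ (σ k)) t)
    | .app t u => .app (msubT σ t) (msubT σ u)
    | .mabs c => .mabs (msubC (upsM σ) c)
  /-- Structural substitution in λμ-commands. -/
  def msubC (σ : ℕ → Ct) : Cm → Cm
    | .cmd a t => fill (σ a) (msubT σ t)
end

/-- Structural substitution in λμ-contexts (the head variable of
`⟨β⟩(t ·)` is, by the freshness convention of the translations,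
never the substituted variable, so it is left untouched). -/
def msubE (σ : ℕ → Ct) : Ct → Ct
  | .cvar a => σ a
  | .push b t => .push b (msubT σ t)
  | .cons e t => .cons (msubE σ e) (msubT σ t)

/-- The structural substitution replacing the μ-variable `a` by the context `e`. -/
def sub1M (a : ℕ) (e : Ct) : ℕ → Ct := fun k => if k = a then e else .cvar k

/-- The structural substitution replacing the bound μ-variable 0 by the
context `e` (removing the binder). -/
def sub0M (e : Ct) : ℕ → Ct
  | 0 => e
  | k+1 => .cvar k

mutual
  /-- Number of free occurrences of the λ-variable `x` in a λμ-term. -/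
  def cntLT (x : ℕ) : Tm → ℕ
    | .var y => if y = x then 1 else 0
    | .abs t => cntLT (x+1) t
    | .app t u => cntLT x t + cntLT x u
    | .mabs c => cntLC x c
  /-- Number of free occurrences of the λ-variable `x` in a λμ-command. -/
  def cntLC (x : ℕ) : Cm → ℕ
    | .cmd _ t => cntLT x t
end

/-- λμ-values `v ::= x | λx.t`. -/
inductive IsVal : Tm → Prop
  | var (x : ℕ) : IsVal (.var x)
  | abs (t : Tm) : IsVal (.abs t)

/-! ### Reduction in λμ: congruence closure of root rules -/

mutual
  /-- Congruence (compatible) closure of root relations, term level. -/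
  inductive KT (R1 : Tm → Tm → Prop) (R2 : Cm → Cm → Prop) : Tm → Tm → Prop
    | root {t t'} : R1 t t' → KT R1 R2 t t'
    | absC {t t'} : KT R1 R2 t t' → KT R1 R2 (.abs t) (.abs t')
    | appL {t t'} (u) : KT R1 R2 t t' → KT R1 R2 (.app t u) (.app t' u)
    | appR (t) {u u'} : KT R1 R2 u u' → KT R1 R2 (.app t u) (.app t u')
    | mabsC {c c'} : KC R1 R2 c c' → KT R1 R2 (.mabs c) (.mabs c')
  /-- Congruence (compatible) closure of root relations, command level. -/
  inductive KC (R1 : Tm → Tm → Prop) (R2 : Cm → Cm → Prop) : Cm → Cm → Prop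
    | root {c c'} : R2 c c' → KC R1 R2 c c'
    | cmdC (a) {t t'} : KT R1 R2 t t' → KC R1 R2 (.cmd a t) (.cmd a t')
end

/-- Term-level root rules of the undirected λμ-calculus: β, μ, μ', θ. -/
inductive RootT : Tm → Tm → Prop
  | beta (u t : Tm) : RootT (.app (.abs u) t) (lsubT (sub0L t) u)
  | mu (c : Cm) (t : Tm) : RootT (.app (.mabs c) t)
      (.mabs (msubC (sub1M 0 (.cons (.cvar 0) (renMT Nat.succ t))) c))
  | mu' (t : Tm) (c : Cm) : RootT (.app t (.mabs c))
      (.mabs (msubC (sub1M 0 (.push 0 (renMT Nat.succ t))) c))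
  | theta (t : Tm) : RootT (.mabs (.cmd 0 (renMT Nat.succ t))) t

/-- Command-level root rule of the λμ-calculus: ρ. -/
inductive RootC : Cm → Cm → Prop
  | rho (b : ℕ) (c : Cm) : RootC (.cmd b (.mabs c)) (msubC (sub0M (.cvar b)) c)

/-- Term-level *linear* root rules of the λμ-calculus: θ, and β when the
argument is a variable or the bound variable occurs exactly once. -/
inductive RootTlin : Tm → Tm → Prop
  | beta (u t : Tm) : ((∃ y, t = Tm.var y) ∨ cntLT 0 u = 1) →
      RootTlin (.app (.abs u) t) (lsubT (sub0L t) u)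
  | theta (t : Tm) : RootTlin (.mabs (.cmd 0 (renMT Nat.succ t))) t

/-- Term-level root rules of call-by-name λμ: β, μ, θ (no μ'). -/
inductive RootTn : Tm → Tm → Prop
  | beta (u t : Tm) : RootTn (.app (.abs u) t) (lsubT (sub0L t) u)
  | mu (c : Cm) (t : Tm) : RootTn (.app (.mabs c) t)
      (.mabs (msubC (sub1M 0 (.cons (.cvar 0) (renMT Nat.succ t))) c))
  | theta (t : Tm) : RootTn (.mabs (.cmd 0 (renMT Nat.succ t))) t

/-- Term-level root rules of call-by-value λμ: βv, μv, μ', θ. -/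
inductive RootTv : Tm → Tm → Prop
  | betav (u t : Tm) : IsVal t → RootTv (.app (.abs u) t) (lsubT (sub0L t) u)
  | muv (c : Cm) (t : Tm) : IsVal t → RootTv (.app (.mabs c) t)
      (.mabs (msubC (sub1M 0 (.cons (.cvar 0) (renMT Nat.succ t))) c))
  | mu' (t : Tm) (c : Cm) : RootTv (.app t (.mabs c))
      (.mabs (msubC (sub1M 0 (.push 0 (renMT Nat.succ t))) c))
  | theta (t : Tm) : RootTv (.mabs (.cmd 0 (renMT Nat.succ t))) t

/-- Term-level *linear call-by-value* root rules of λμ. -/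
inductive RootTvlin : Tm → Tm → Prop
  | betav (u t : Tm) : IsVal t → ((∃ y, t = Tm.var y) ∨ cntLT 0 u = 1) →
      RootTvlin (.app (.abs u) t) (lsubT (sub0L t) u)
  | theta (t : Tm) : RootTvlin (.mabs (.cmd 0 (renMT Nat.succ t))) t

/-- One-step λμ-reduction (β, μ, μ', ρ, θ), terms. -/
abbrev StepT := KT RootT RootC
/-- One-step λμ-reduction (β, μ, μ', ρ, θ), commands. -/
abbrev StepC := KC RootT RootC
/-- One-step linear λμ-reduction, terms. -/
abbrev LStepT := KT RootTlin RootC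
/-- One-step linear λμ-reduction, commands. -/
abbrev LStepC := KC RootTlin RootC
/-- One-step call-by-name λμ-reduction, terms. -/
abbrev StepNT := KT RootTn RootC
/-- One-step call-by-name λμ-reduction, commands. -/
abbrev StepNC := KC RootTn RootC
/-- One-step call-by-value λμ-reduction, terms. -/
abbrev StepVT := KT RootTv RootC
/-- One-step call-by-value λμ-reduction, commands. -/
abbrev StepVC := KC RootTv RootC
/-- One-step linear call-by-value λμ-reduction, terms. -/
abbrev LStepVT := KT RootTvlin RootC
/-- One-step linear call-by-value λμ-reduction, commands. -/
abbrev LStepVC := KC RootTvlin RootC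

/-- Reflexive-transitive closure. -/
abbrev Star {α : Type} (r : α → α → Prop) : α → α → Prop := Relation.ReflTransGen r

/-! ## The λ̄μμ̃-calculus (de Bruijn representation). -/

mutual
  inductive BTm : Type
    | var : ℕ → BTm
    | abs : BTm → BTm
    | mabs : BCm → BTm
  inductive BCm : Type
    | cut : BTm → BCt → BCm
  inductive BCt : Type
    | cvar : ℕ → BCt
    | cons : BTm → BCt → BCt
    | tmu : BCm → BCt
end

mutual
  /-- Renaming of λ-variables in λ̄μμ̃-terms. -/
  def brenLT (ξ : ℕ → ℕ) : BTm → BTm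
    | .var x => .var (ξ x)
    | .abs t => .abs (brenLT (upr ξ) t)
    | .mabs c => .mabs (brenLC ξ c)
  def brenLC (ξ : ℕ → ℕ) : BCm → BCm
    | .cut t e => .cut (brenLT ξ t) (brenLE ξ e)
  def brenLE (ξ : ℕ → ℕ) : BCt → BCt
    | .cvar a => .cvar a
    | .cons t e => .cons (brenLT ξ t) (brenLE ξ e)
    | .tmu c => .tmu (brenLC (upr ξ) c)
end

mutual
  /-- Renaming of μ-variables in λ̄μμ̃-terms. -/
  def brenMT (ξ : ℕ → ℕ) : BTm → BTm
    | .var x => .var x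
    | .abs t => .abs (brenMT ξ t)
    | .mabs c => .mabs (brenMC (upr ξ) c)
  def brenMC (ξ : ℕ → ℕ) : BCm → BCm
    | .cut t e => .cut (brenMT ξ t) (brenME ξ e)
  def brenME (ξ : ℕ → ℕ) : BCt → BCt
    | .cvar a => .cvar (ξ a)
    | .cons t e => .cons (brenMT ξ t) (brenME ξ e)
    | .tmu c => .tmu (brenMC ξ c)
end

def bupsL (σ : ℕ → BTm) : ℕ → BTm
  | 0 => .var 0
  | k+1 => brenLT Nat.succ (σ k)

mutual
  /-- Substitution for λ-variables in λ̄μμ̃-terms. -/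
  def blsubT (σ : ℕ → BTm) : BTm → BTm
    | .var x => σ x
    | .abs t => .abs (blsubT (bupsL σ) t)
    | .mabs c => .mabs (blsubC (fun k => brenMT Nat.succ (σ k)) c)
  def blsubC (σ : ℕ → BTm) : BCm → BCm
    | .cut t e => .cut (blsubT σ t) (blsubE σ e)
  def blsubE (σ : ℕ → BTm) : BCt → BCt
    | .cvar a => .cvar a
    | .cons t e => .cons (blsubT σ t) (blsubE σ e)
    | .tmu c => .tmu (blsubC (bupsL σ) c)
end

def bsub1L (x : ℕ) (u : BTm) : ℕ → BTm := fun k => if k = x then u else .var k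

def bsub0L (u : BTm) : ℕ → BTm
  | 0 => u
  | k+1 => .var k

def bupsM (σ : ℕ → BCt) : ℕ → BCt
  | 0 => .cvar 0
  | k+1 => brenME Nat.succ (σ k)

mutual
  /-- Structural substitution of contexts for μ-variables in λ̄μμ̃-terms. -/
  def bmsubT (σ : ℕ → BCt) : BTm → BTm
    | .var x => .var x
    | .abs t => .abs (bmsubT (fun k => brenLE Nat.succ (σ k)) t)
    | .mabs c => .mabs (bmsubC (bupsM σ) c)
  def bmsubC (σ : ℕ → BCt) : BCm → BCm
    | .cut t e => .cut (bmsubT σ t) (bmsubE σ e)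
  def bmsubE (σ : ℕ → BCt) : BCt → BCt
    | .cvar a => σ a
    | .cons t e => .cons (bmsubT σ t) (bmsubE σ e)
    | .tmu c => .tmu (bmsubC (fun k => brenLE Nat.succ (σ k)) c)
end

def bsub1M (a : ℕ) (e : BCt) : ℕ → BCt := fun k => if k = a then e else .cvar k

def bsub0M (e : BCt) : ℕ → BCt
  | 0 => e
  | k+1 => .cvar k

mutual
  /-- Number of free occurrences of the λ-variable `x` in a λ̄μμ̃-term. -/
  def bcntLT (x : ℕ) : BTm → ℕ
    | .var y => if y = x then 1 else 0
    | .abs t => bcntLT (x+1) t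
    | .mabs c => bcntLC x c
  def bcntLC (x : ℕ) : BCm → ℕ
    | .cut t e => bcntLT x t + bcntLE x e
  def bcntLE (x : ℕ) : BCt → ℕ
    | .cvar _ => 0
    | .cons t e => bcntLT x t + bcntLE x e
    | .tmu c => bcntLC (x+1) c
end

mutual
  /-- Number of free occurrences of the μ-variable `a` in a λ̄μμ̃-term. -/
  def bcntMT (a : ℕ) : BTm → ℕ
    | .var _ => 0
    | .abs t => bcntMT a t
    | .mabs c => bcntMC (a+1) c
  def bcntMC (a : ℕ) : BCm → ℕ
    | .cut t e => bcntMT a t + bcntME a e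
  def bcntME (a : ℕ) : BCt → ℕ
    | .cvar b => if b = a then 1 else 0
    | .cons t e => bcntMT a t + bcntME a e
    | .tmu c => bcntMC a c
end

/-- λ̄μμ̃-values `v ::= x | λx.t`. -/
inductive BIsVal : BTm → Prop
  | var (x : ℕ) : BIsVal (.var x)
  | abs (t : BTm) : BIsVal (.abs t)

/-- Stacks (the contexts of λ̄μμ̃_T): `s ::= α | t · s`. -/
inductive IsStk : BCt → Prop
  | cvar (a : ℕ) : IsStk (.cvar a)
  | cons (t : BTm) {s : BCt} : IsStk s → IsStk (.cons t s)

/-! ### Reduction in λ̄μμ̃: congruence closure of root rules -/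

mutual
  inductive JT (R1 : BTm → BTm → Prop) (R2 : BCm → BCm → Prop) : BTm → BTm → Prop
    | root {t t'} : R1 t t' → JT R1 R2 t t'
    | absC {t t'} : JT R1 R2 t t' → JT R1 R2 (.abs t) (.abs t')
    | mabsC {c c'} : JC R1 R2 c c' → JT R1 R2 (.mabs c) (.mabs c')
  inductive JC (R1 : BTm → BTm → Prop) (R2 : BCm → BCm → Prop) : BCm → BCm → Prop
    | root {c c'} : R2 c c' → JC R1 R2 c c'
    | cutL {t t'} (e) : JT R1 R2 t t' → JC R1 R2 (.cut t e) (.cut t' e)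
    | cutR (t) {e e'} : JE R1 R2 e e' → JC R1 R2 (.cut t e) (.cut t e')
  inductive JE (R1 : BTm → BTm → Prop) (R2 : BCm → BCm → Prop) : BCt → BCt → Prop
    | consL {t t'} (e) : JT R1 R2 t t' → JE R1 R2 (.cons t e) (.cons t' e)
    | consR (t) {e e'} : JE R1 R2 e e' → JE R1 R2 (.cons t e) (.cons t e')
    | tmuC {c c'} : JC R1 R2 c c' → JE R1 R2 (.tmu c) (.tmu c')
end

/-- The term-level root rule of λ̄μμ̃: θ (shared by all evaluation disciplines). -/
inductive BRootT : BTm → BTm → Prop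
  | theta (t : BTm) : BRootT (.mabs (.cut (brenMT Nat.succ t) (.cvar 0))) t

/-- Command-level root rules of the undirected λ̄μμ̃-calculus: β, μ, μ̃. -/
inductive BRootC : BCm → BCm → Prop
  | beta (u t : BTm) (e : BCt) :
      BRootC (.cut (.abs u) (.cons t e)) (.cut t (.tmu (.cut u (brenLE Nat.succ e))))
  | mu (c : BCm) (e : BCt) : BRootC (.cut (.mabs c) e) (bmsubC (bsub0M e) c)
  | mutilde (t : BTm) (c : BCm) : BRootC (.cut t (.tmu c)) (blsubC (bsub0L t) c)

/-- Command-level *linear* root rules of λ̄μμ̃: β always; μ (resp. μ̃) when the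
substituted context (resp. term) is a variable or the bound variable occurs
exactly once in the command. -/
inductive BRootClin : BCm → BCm → Prop
  | beta (u t : BTm) (e : BCt) :
      BRootClin (.cut (.abs u) (.cons t e)) (.cut t (.tmu (.cut u (brenLE Nat.succ e))))
  | mu (c : BCm) (e : BCt) : ((∃ a, e = BCt.cvar a) ∨ bcntMC 0 c = 1) →
      BRootClin (.cut (.mabs c) e) (bmsubC (bsub0M e) c)
  | mutilde (t : BTm) (c : BCm) : ((∃ x, t = BTm.var x) ∨ bcntLC 0 c = 1) →
      BRootClin (.cut t (.tmu c)) (blsubC (bsub0L t) c)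

/-- Command-level root rules of call-by-name λ̄μμ̃ (λ̄μμ̃_T): β, μₙ (stacks), μ̃. -/
inductive BRootCn : BCm → BCm → Prop
  | beta (u t : BTm) (e : BCt) :
      BRootCn (.cut (.abs u) (.cons t e)) (.cut t (.tmu (.cut u (brenLE Nat.succ e))))
  | mun (c : BCm) (s : BCt) : IsStk s → BRootCn (.cut (.mabs c) s) (bmsubC (bsub0M s) c)
  | mutilde (t : BTm) (c : BCm) : BRootCn (.cut t (.tmu c)) (blsubC (bsub0L t) c)

/-- Command-level *linear call-by-name* root rules of λ̄μμ̃. -/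
inductive BRootCnlin : BCm → BCm → Prop
  | beta (u t : BTm) (e : BCt) :
      BRootCnlin (.cut (.abs u) (.cons t e)) (.cut t (.tmu (.cut u (brenLE Nat.succ e))))
  | mun (c : BCm) (s : BCt) : IsStk s → ((∃ a, s = BCt.cvar a) ∨ bcntMC 0 c = 1) →
      BRootCnlin (.cut (.mabs c) s) (bmsubC (bsub0M s) c)
  | mutilde (t : BTm) (c : BCm) : ((∃ x, t = BTm.var x) ∨ bcntLC 0 c = 1) →
      BRootCnlin (.cut t (.tmu c)) (blsubC (bsub0L t) c)

/-- Command-level root rules of call-by-value λ̄μμ̃ (λ̄μμ̃_Q): β, μ, μ̃ᵥ (values). -/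
inductive BRootCv : BCm → BCm → Prop
  | beta (u t : BTm) (e : BCt) :
      BRootCv (.cut (.abs u) (.cons t e)) (.cut t (.tmu (.cut u (brenLE Nat.succ e))))
  | mu (c : BCm) (e : BCt) : BRootCv (.cut (.mabs c) e) (bmsubC (bsub0M e) c)
  | mutildev (v : BTm) (c : BCm) : BIsVal v →
      BRootCv (.cut v (.tmu c)) (blsubC (bsub0L v) c)

/-- Command-level *linear call-by-value* root rules of λ̄μμ̃. -/
inductive BRootCvlin : BCm → BCm → Prop
  | beta (u t : BTm) (e : BCt) :
      BRootCvlin (.cut (.abs u) (.cons t e)) (.cut t (.tmu (.cut u (brenLE Nat.succ e))))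
  | mu (c : BCm) (e : BCt) : ((∃ a, e = BCt.cvar a) ∨ bcntMC 0 c = 1) →
      BRootCvlin (.cut (.mabs c) e) (bmsubC (bsub0M e) c)
  | mutildev (v : BTm) (c : BCm) : BIsVal v → ((∃ x, v = BTm.var x) ∨ bcntLC 0 c = 1) →
      BRootCvlin (.cut v (.tmu c)) (blsubC (bsub0L v) c)

/-- Command-level root rules with β' instead of β: β', μ, μ̃. -/
inductive BRootCp : BCm → BCm → Prop
  | beta' (u t : BTm) (e : BCt) :
      BRootCp (.cut (.abs u) (.cons t e)) (.cut (blsubT (bsub0L t) u) e)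
  | mu (c : BCm) (e : BCt) : BRootCp (.cut (.mabs c) e) (bmsubC (bsub0M e) c)
  | mutilde (t : BTm) (c : BCm) : BRootCp (.cut t (.tmu c)) (blsubC (bsub0L t) c)

/-- Command-level call-by-name root rules with β': β', μₙ, μ̃. -/
inductive BRootCnp : BCm → BCm → Prop
  | beta' (u t : BTm) (e : BCt) :
      BRootCnp (.cut (.abs u) (.cons t e)) (.cut (blsubT (bsub0L t) u) e)
  | mun (c : BCm) (s : BCt) : IsStk s → BRootCnp (.cut (.mabs c) s) (bmsubC (bsub0M s) c)
  | mutilde (t : BTm) (c : BCm) : BRootCnp (.cut t (.tmu c)) (blsubC (bsub0L t) c)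

/-- Command-level call-by-value root rules with β': β' (values), μ, μ̃ᵥ. -/
inductive BRootCvp : BCm → BCm → Prop
  | beta' (u v : BTm) (e : BCt) : BIsVal v →
      BRootCvp (.cut (.abs u) (.cons v e)) (.cut (blsubT (bsub0L v) u) e)
  | mu (c : BCm) (e : BCt) : BRootCvp (.cut (.mabs c) e) (bmsubC (bsub0M e) c)
  | mutildev (v : BTm) (c : BCm) : BIsVal v →
      BRootCvp (.cut v (.tmu c)) (blsubC (bsub0L v) c)

/-- One-step λ̄μμ̃-reduction (β, μ, μ̃, θ), terms. -/
abbrev BStepT := JT BRootT BRootC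
abbrev BStepC := JC BRootT BRootC
abbrev BStepE := JE BRootT BRootC
/-- One-step linear λ̄μμ̃-reduction. -/
abbrev LBStepT := JT BRootT BRootClin
abbrev LBStepC := JC BRootT BRootClin
abbrev LBStepE := JE BRootT BRootClin
/-- One-step call-by-name λ̄μμ̃-reduction. -/
abbrev BStepNT := JT BRootT BRootCn
abbrev BStepNC := JC BRootT BRootCn
abbrev BStepNE := JE BRootT BRootCn
/-- One-step linear call-by-name λ̄μμ̃-reduction. -/
abbrev LBStepNT := JT BRootT BRootCnlin
abbrev LBStepNC := JC BRootT BRootCnlin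
/-- One-step call-by-value λ̄μμ̃-reduction. -/
abbrev BStepVT := JT BRootT BRootCv
abbrev BStepVC := JC BRootT BRootCv
/-- One-step linear call-by-value λ̄μμ̃-reduction. -/
abbrev LBStepVT := JT BRootT BRootCvlin
abbrev LBStepVC := JC BRootT BRootCvlin
/-- One-step λ̄μμ̃-reduction with β' (β', μ, μ̃, θ). -/
abbrev BStepPT := JT BRootT BRootCp
abbrev BStepPC := JC BRootT BRootCp
/-- One-step call-by-name λ̄μμ̃-reduction with β'. -/
abbrev BStepNPT := JT BRootT BRootCnp
abbrev BStepNPC := JC BRootT BRootCnp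
/-- One-step call-by-value λ̄μμ̃-reduction with β'. -/
abbrev BStepVPT := JT BRootT BRootCvp
abbrev BStepVPC := JC BRootT BRootCvp

/-! ## The translation `(·)†` from λμ to λ̄μμ̃ -/

mutual
  /-- `x† = x`, `(λx.u)† = λx.u†`, `(u v)† = μβ.⟨v† | μ̃y.⟨u† | y·β⟩⟩`
  (`y`, `β` fresh, realized by de Bruijn lifting), `(μα.c)† = μα.c†`. -/
  def dagT : Tm → BTm
    | .var x => .var x
    | .abs t => .abs (dagT t)
    | .app u v => .mabs (.cut (brenMT Nat.succ (dagT v))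
        (.tmu (.cut (brenLT Nat.succ (brenMT Nat.succ (dagT u)))
          (.cons (.var 0) (.cvar 0)))))
    | .mabs c => .mabs (dagC c)
  /-- `([α]t)† = ⟨t† | α⟩`. -/
  def dagC : Cm → BCm
    | .cmd a t => .cut (dagT t) (.cvar a)
end

/-- `⟨α⟩† = α`, `(⟨β⟩(t ·))† = μ̃y.⟨t† | y·β⟩`, `(h · t)† = t† · h†`. -/
def dagE : Ct → BCt
  | .cvar a => .cvar a
  | .push b t => .tmu (.cut (brenLT Nat.succ (dagT t)) (.cons (.var 0) (.cvar b)))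
  | .cons e t => .cons (dagT t) (dagE e)

/-! ## The translation `(·)∘` from λ̄μμ̃ to λμ -/

mutual
  /-- `x∘ = x`, `(λx.u)∘ = λx.u∘`, `(μα.c)∘ = μα.c∘`. -/
  def circT : BTm → Tm
    | .var x => .var x
    | .abs t => .abs (circT t)
    | .mabs c => .mabs (circC c)
  /-- `⟨t | e⟩∘ = e∘⟨t∘⟩`. -/
  def circC : BCm → Cm
    | .cut t e => fill (circE e) (circT t)
  /-- `α∘ = ⟨α⟩`, `(t · h)∘ = h∘ · t∘`,
  `(μ̃x.c)∘ = ⟨β⟩((λx.μδ.c∘) ·)` with `δ ∉ c` (realized by lifting). -/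
  def circE : BCt → Ct
    | .cvar a => .cvar a
    | .cons t e => .cons (circE e) (circT t)
    | .tmu c => .push 0 (.abs (.mabs (renMC Nat.succ (circC c))))
end

/-! Call-by-name λμ-reduction only ever substitutes the stack contexts `⟨α⟩` and `⟨α⟩ · t` for
μ-variables. For a stack context `e`, the translation `(e⟨t⟩)†` reduces to `⟨t† | e†⟩` by one
linear μ- and one linear μ̃-step per argument, so `(c[α := e])†` reduces linearly to
`c†[α := e†]`. In the other direction, the translation `μα.⟨v† | μ̃y.⟨u† | y · α⟩⟩` of an
application first fires its μ̃-redex, giving `μα.⟨u† | v† · α⟩`; a β-redex `u = λx.w` is then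
finished by β, μ̃ and θ, and a μ-redex `u = μβ.c` by one μₙ-step, which lands exactly on the
linear reduct of the translated λμ-reduct. ρ and θ become μₙ and θ, and the congruence cases
hold because λ̄μμ̃-reduction is stable under renaming. -/

theorem upr_comp (ξ ζ : ℕ → ℕ) : (fun k => upr ξ (upr ζ k)) = upr (fun k => ξ (ζ k)) :=
  funext fun k => by cases k <;> rfl

theorem upr_comp_succ (ξ : ℕ → ℕ) : (fun k => upr ξ (Nat.succ k)) = fun k => Nat.succ (ξ k) :=
  rfl

theorem upr_injective {ξ : ℕ → ℕ} (h : Function.Injective ξ) : Function.Injective (upr ξ)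
  | 0, 0, _ => rfl
  | 0, _ + 1, h0 => absurd h0 (Nat.succ_ne_zero _).symm
  | _ + 1, 0, h0 => absurd h0 (Nat.succ_ne_zero _)
  | _ + 1, _ + 1, hkl => congrArg Nat.succ (h (Nat.succ_injective hkl))

theorem upr_ne_succ {ξ : ℕ → ℕ} {x : ℕ} (h : ∀ y, ξ y ≠ x) : ∀ y, upr ξ y ≠ x + 1
  | 0 => (Nat.succ_ne_zero x).symm
  | y + 1 => fun hy => h y (Nat.succ_injective hy)

mutual
theorem brenLT_brenLT : ∀ (t : BTm) (ξ ζ), brenLT ξ (brenLT ζ t) = brenLT (fun k => ξ (ζ k)) t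
  | .var _, _, _ => rfl
  | .abs t, ξ, ζ => by simp only [brenLT, brenLT_brenLT t, upr_comp]
  | .mabs c, ξ, ζ => by simp only [brenLT, brenLC_brenLC c]
theorem brenLC_brenLC : ∀ (c : BCm) (ξ ζ), brenLC ξ (brenLC ζ c) = brenLC (fun k => ξ (ζ k)) c
  | .cut t e, ξ, ζ => by simp only [brenLC, brenLT_brenLT t, brenLE_brenLE e]
theorem brenLE_brenLE : ∀ (e : BCt) (ξ ζ), brenLE ξ (brenLE ζ e) = brenLE (fun k => ξ (ζ k)) e
  | .cvar _, _, _ => rfl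
  | .cons t e, ξ, ζ => by simp only [brenLE, brenLT_brenLT t, brenLE_brenLE e]
  | .tmu c, ξ, ζ => by simp only [brenLE, brenLC_brenLC c, upr_comp]
end

mutual
theorem brenMT_brenMT : ∀ (t : BTm) (ξ ζ), brenMT ξ (brenMT ζ t) = brenMT (fun k => ξ (ζ k)) t
  | .var _, _, _ => rfl
  | .abs t, ξ, ζ => by simp only [brenMT, brenMT_brenMT t]
  | .mabs c, ξ, ζ => by simp only [brenMT, brenMC_brenMC c, upr_comp]
theorem brenMC_brenMC : ∀ (c : BCm) (ξ ζ), brenMC ξ (brenMC ζ c) = brenMC (fun k => ξ (ζ k)) c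
  | .cut t e, ξ, ζ => by simp only [brenMC, brenMT_brenMT t, brenME_brenME e]
theorem brenME_brenME : ∀ (e : BCt) (ξ ζ), brenME ξ (brenME ζ e) = brenME (fun k => ξ (ζ k)) e
  | .cvar _, _, _ => rfl
  | .cons t e, ξ, ζ => by simp only [brenME, brenMT_brenMT t, brenME_brenME e]
  | .tmu c, ξ, ζ => by simp only [brenME, brenMC_brenMC c]
end

mutual
theorem brenLT_brenMT : ∀ (t : BTm) (ξ ζ), brenLT ξ (brenMT ζ t) = brenMT ζ (brenLT ξ t)
  | .var _, _, _ => rfl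
  | .abs t, ξ, ζ => by simp only [brenLT, brenMT, brenLT_brenMT t]
  | .mabs c, ξ, ζ => by simp only [brenLT, brenMT, brenLC_brenMC c]
theorem brenLC_brenMC : ∀ (c : BCm) (ξ ζ), brenLC ξ (brenMC ζ c) = brenMC ζ (brenLC ξ c)
  | .cut t e, ξ, ζ => by simp only [brenLC, brenMC, brenLT_brenMT t, brenLE_brenME e]
theorem brenLE_brenME : ∀ (e : BCt) (ξ ζ), brenLE ξ (brenME ζ e) = brenME ζ (brenLE ξ e)
  | .cvar _, _, _ => rfl
  | .cons t e, ξ, ζ => by simp only [brenLE, brenME, brenLT_brenMT t, brenLE_brenME e]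
  | .tmu c, ξ, ζ => by simp only [brenLE, brenME, brenLC_brenMC c]
end

theorem bupsL_comp_upr (σ : ℕ → BTm) (ζ : ℕ → ℕ) :
    (fun k => bupsL σ (upr ζ k)) = bupsL (fun k => σ (ζ k)) :=
  funext fun k => by cases k <;> rfl

theorem brenLT_bupsL (σ : ℕ → BTm) (ξ : ℕ → ℕ) :
    (fun k => brenLT (upr ξ) (bupsL σ k)) = bupsL (fun k => brenLT ξ (σ k)) :=
  funext fun k => by
    cases k with
    | zero => rfl
    | succ k => simp only [bupsL, brenLT_brenLT, upr_comp_succ]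

theorem brenMT_bupsL (σ : ℕ → BTm) (ξ : ℕ → ℕ) :
    (fun k => brenMT ξ (bupsL σ k)) = bupsL (fun k => brenMT ξ (σ k)) :=
  funext fun k => by cases k <;> simp only [bupsL, brenLT_brenMT]; rfl

theorem bupsM_comp_upr (σ : ℕ → BCt) (ζ : ℕ → ℕ) :
    (fun k => bupsM σ (upr ζ k)) = bupsM (fun k => σ (ζ k)) :=
  funext fun k => by cases k <;> rfl

theorem brenME_bupsM (σ : ℕ → BCt) (ξ : ℕ → ℕ) :
    (fun k => brenME (upr ξ) (bupsM σ k)) = bupsM (fun k => brenME ξ (σ k)) :=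
  funext fun k => by
    cases k with
    | zero => rfl
    | succ k => simp only [bupsM, brenME_brenME, upr_comp_succ]

theorem brenLE_bupsM (σ : ℕ → BCt) (ξ : ℕ → ℕ) :
    (fun k => brenLE ξ (bupsM σ k)) = bupsM (fun k => brenLE ξ (σ k)) :=
  funext fun k => by cases k <;> simp only [bupsM, brenLE_brenME]; rfl

mutual
theorem blsubT_brenLT : ∀ (t : BTm) (σ : ℕ → BTm) (ζ),
    blsubT σ (brenLT ζ t) = blsubT (fun k => σ (ζ k)) t
  | .var _, _, _ => rfl
  | .abs t, σ, ζ => by simp only [brenLT, blsubT, blsubT_brenLT t, bupsL_comp_upr]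
  | .mabs c, σ, ζ => by simp only [brenLT, blsubT, blsubC_brenLC c]
theorem blsubC_brenLC : ∀ (c : BCm) (σ : ℕ → BTm) (ζ),
    blsubC σ (brenLC ζ c) = blsubC (fun k => σ (ζ k)) c
  | .cut t e, σ, ζ => by simp only [brenLC, blsubC, blsubT_brenLT t, blsubE_brenLE e]
theorem blsubE_brenLE : ∀ (e : BCt) (σ : ℕ → BTm) (ζ),
    blsubE σ (brenLE ζ e) = blsubE (fun k => σ (ζ k)) e
  | .cvar _, _, _ => rfl
  | .cons t e, σ, ζ => by simp only [brenLE, blsubE, blsubT_brenLT t, blsubE_brenLE e]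
  | .tmu c, σ, ζ => by simp only [brenLE, blsubE, blsubC_brenLC c, bupsL_comp_upr]
end

mutual
theorem brenLT_blsubT : ∀ (t : BTm) (σ : ℕ → BTm) (ξ),
    brenLT ξ (blsubT σ t) = blsubT (fun k => brenLT ξ (σ k)) t
  | .var _, _, _ => rfl
  | .abs t, σ, ξ => by simp only [blsubT, brenLT, brenLT_blsubT t, brenLT_bupsL]
  | .mabs c, σ, ξ => by simp only [blsubT, brenLT, brenLC_blsubC c, brenLT_brenMT]
theorem brenLC_blsubC : ∀ (c : BCm) (σ : ℕ → BTm) (ξ),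
    brenLC ξ (blsubC σ c) = blsubC (fun k => brenLT ξ (σ k)) c
  | .cut t e, σ, ξ => by simp only [blsubC, brenLC, brenLT_blsubT t, brenLE_blsubE e]
theorem brenLE_blsubE : ∀ (e : BCt) (σ : ℕ → BTm) (ξ),
    brenLE ξ (blsubE σ e) = blsubE (fun k => brenLT ξ (σ k)) e
  | .cvar _, _, _ => rfl
  | .cons t e, σ, ξ => by simp only [blsubE, brenLE, brenLT_blsubT t, brenLE_blsubE e]
  | .tmu c, σ, ξ => by simp only [blsubE, brenLE, brenLC_blsubC c, brenLT_bupsL]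
end

mutual
theorem brenMT_blsubT : ∀ (t : BTm) (σ : ℕ → BTm) (ξ),
    brenMT ξ (blsubT σ t) = blsubT (fun k => brenMT ξ (σ k)) (brenMT ξ t)
  | .var _, _, _ => rfl
  | .abs t, σ, ξ => by simp only [blsubT, brenMT, brenMT_blsubT t, brenMT_bupsL]
  | .mabs c, σ, ξ => by
      simp only [blsubT, brenMT, brenMC_blsubC c, brenMT_brenMT, upr_comp_succ]
theorem brenMC_blsubC : ∀ (c : BCm) (σ : ℕ → BTm) (ξ),
    brenMC ξ (blsubC σ c) = blsubC (fun k => brenMT ξ (σ k)) (brenMC ξ c)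
  | .cut t e, σ, ξ => by simp only [blsubC, brenMC, brenMT_blsubT t, brenME_blsubE e]
theorem brenME_blsubE : ∀ (e : BCt) (σ : ℕ → BTm) (ξ),
    brenME ξ (blsubE σ e) = blsubE (fun k => brenMT ξ (σ k)) (brenME ξ e)
  | .cvar _, _, _ => rfl
  | .cons t e, σ, ξ => by simp only [blsubE, brenME, brenMT_blsubT t, brenME_blsubE e]
  | .tmu c, σ, ξ => by simp only [blsubE, brenME, brenMC_blsubC c, brenMT_bupsL]
end

mutual
theorem blsubT_eq_self : ∀ (t : BTm) {σ : ℕ → BTm}, (∀ k, σ k = .var k) → blsubT σ t = t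
  | .var x, _, h => h x
  | .abs t, σ, h => by
      rw [blsubT, blsubT_eq_self t fun k => by cases k <;> simp only [bupsL, h, brenLT]]
  | .mabs c, σ, h => by rw [blsubT, blsubC_eq_self c fun k => by rw [h k]; rfl]
theorem blsubC_eq_self : ∀ (c : BCm) {σ : ℕ → BTm}, (∀ k, σ k = .var k) → blsubC σ c = c
  | .cut t e, _, h => by rw [blsubC, blsubT_eq_self t h, blsubE_eq_self e h]
theorem blsubE_eq_self : ∀ (e : BCt) {σ : ℕ → BTm}, (∀ k, σ k = .var k) → blsubE σ e = e
  | .cvar _, _, _ => rfl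
  | .cons t e, _, h => by rw [blsubE, blsubT_eq_self t h, blsubE_eq_self e h]
  | .tmu c, σ, h => by
      rw [blsubE, blsubC_eq_self c fun k => by cases k <;> simp only [bupsL, h, brenLT]]
end

mutual
theorem bmsubT_brenMT : ∀ (t : BTm) (σ : ℕ → BCt) (ζ),
    bmsubT σ (brenMT ζ t) = bmsubT (fun k => σ (ζ k)) t
  | .var _, _, _ => rfl
  | .abs t, σ, ζ => by simp only [brenMT, bmsubT, bmsubT_brenMT t]
  | .mabs c, σ, ζ => by simp only [brenMT, bmsubT, bmsubC_brenMC c, bupsM_comp_upr]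
theorem bmsubC_brenMC : ∀ (c : BCm) (σ : ℕ → BCt) (ζ),
    bmsubC σ (brenMC ζ c) = bmsubC (fun k => σ (ζ k)) c
  | .cut t e, σ, ζ => by simp only [brenMC, bmsubC, bmsubT_brenMT t, bmsubE_brenME e]
theorem bmsubE_brenME : ∀ (e : BCt) (σ : ℕ → BCt) (ζ),
    bmsubE σ (brenME ζ e) = bmsubE (fun k => σ (ζ k)) e
  | .cvar _, _, _ => rfl
  | .cons t e, σ, ζ => by simp only [brenME, bmsubE, bmsubT_brenMT t, bmsubE_brenME e]
  | .tmu c, σ, ζ => by simp only [brenME, bmsubE, bmsubC_brenMC c]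
end

mutual
theorem brenMT_bmsubT : ∀ (t : BTm) (σ : ℕ → BCt) (ξ),
    brenMT ξ (bmsubT σ t) = bmsubT (fun k => brenME ξ (σ k)) t
  | .var _, _, _ => rfl
  | .abs t, σ, ξ => by simp only [bmsubT, brenMT, brenMT_bmsubT t, brenLE_brenME]
  | .mabs c, σ, ξ => by simp only [bmsubT, brenMT, brenMC_bmsubC c, brenME_bupsM]
theorem brenMC_bmsubC : ∀ (c : BCm) (σ : ℕ → BCt) (ξ),
    brenMC ξ (bmsubC σ c) = bmsubC (fun k => brenME ξ (σ k)) c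
  | .cut t e, σ, ξ => by simp only [bmsubC, brenMC, brenMT_bmsubT t, brenME_bmsubE e]
theorem brenME_bmsubE : ∀ (e : BCt) (σ : ℕ → BCt) (ξ),
    brenME ξ (bmsubE σ e) = bmsubE (fun k => brenME ξ (σ k)) e
  | .cvar _, _, _ => rfl
  | .cons t e, σ, ξ => by simp only [bmsubE, brenME, brenMT_bmsubT t, brenME_bmsubE e]
  | .tmu c, σ, ξ => by simp only [bmsubE, brenME, brenMC_bmsubC c, brenLE_brenME]
end

mutual
theorem brenLT_bmsubT : ∀ (t : BTm) (σ : ℕ → BCt) (ξ),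
    brenLT ξ (bmsubT σ t) = bmsubT (fun k => brenLE ξ (σ k)) (brenLT ξ t)
  | .var _, _, _ => rfl
  | .abs t, σ, ξ => by
      simp only [bmsubT, brenLT, brenLT_bmsubT t, brenLE_brenLE, upr_comp_succ]
  | .mabs c, σ, ξ => by simp only [bmsubT, brenLT, brenLC_bmsubC c, brenLE_bupsM]
theorem brenLC_bmsubC : ∀ (c : BCm) (σ : ℕ → BCt) (ξ),
    brenLC ξ (bmsubC σ c) = bmsubC (fun k => brenLE ξ (σ k)) (brenLC ξ c)
  | .cut t e, σ, ξ => by simp only [bmsubC, brenLC, brenLT_bmsubT t, brenLE_bmsubE e]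
theorem brenLE_bmsubE : ∀ (e : BCt) (σ : ℕ → BCt) (ξ),
    brenLE ξ (bmsubE σ e) = bmsubE (fun k => brenLE ξ (σ k)) (brenLE ξ e)
  | .cvar _, _, _ => rfl
  | .cons t e, σ, ξ => by simp only [bmsubE, brenLE, brenLT_bmsubT t, brenLE_bmsubE e]
  | .tmu c, σ, ξ => by
      simp only [bmsubE, brenLE, brenLC_bmsubC c, brenLE_brenLE, upr_comp_succ]
end

mutual
theorem bmsubT_eq_self : ∀ (t : BTm) {σ : ℕ → BCt}, (∀ k, σ k = .cvar k) → bmsubT σ t = t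
  | .var _, _, _ => rfl
  | .abs t, σ, h => by rw [bmsubT, bmsubT_eq_self t fun k => by rw [h k]; rfl]
  | .mabs c, σ, h => by
      rw [bmsubT, bmsubC_eq_self c fun k => by cases k <;> simp only [bupsM, h, brenME]]
theorem bmsubC_eq_self : ∀ (c : BCm) {σ : ℕ → BCt}, (∀ k, σ k = .cvar k) → bmsubC σ c = c
  | .cut t e, _, h => by rw [bmsubC, bmsubT_eq_self t h, bmsubE_eq_self e h]
theorem bmsubE_eq_self : ∀ (e : BCt) {σ : ℕ → BCt}, (∀ k, σ k = .cvar k) → bmsubE σ e = e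
  | .cvar a, _, h => h a
  | .cons t e, _, h => by rw [bmsubE, bmsubT_eq_self t h, bmsubE_eq_self e h]
  | .tmu c, σ, h => by rw [bmsubE, bmsubC_eq_self c fun k => by rw [h k]; rfl]
end

theorem blsubT_brenLT_succ {σ : ℕ → BTm} (hσ : ∀ k, σ (k + 1) = .var k) (t : BTm) :
    blsubT σ (brenLT Nat.succ t) = t := by
  rw [blsubT_brenLT]; exact blsubT_eq_self t hσ

theorem blsubE_brenLE_succ {σ : ℕ → BTm} (hσ : ∀ k, σ (k + 1) = .var k) (e : BCt) :
    blsubE σ (brenLE Nat.succ e) = e := by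
  rw [blsubE_brenLE]; exact blsubE_eq_self e hσ

theorem bmsubT_brenMT_succ {σ : ℕ → BCt} (hσ : ∀ k, σ (k + 1) = .cvar k) (t : BTm) :
    bmsubT σ (brenMT Nat.succ t) = t := by
  rw [bmsubT_brenMT]; exact bmsubT_eq_self t hσ

mutual
theorem bcntLT_brenLT : ∀ (t : BTm) {ξ : ℕ → ℕ} (x), Function.Injective ξ →
    bcntLT (ξ x) (brenLT ξ t) = bcntLT x t
  | .var y, ξ, x, h => by
      simp only [brenLT, bcntLT, h.eq_iff]
  | .abs t, ξ, x, h => by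
      simpa only [brenLT, bcntLT, upr] using bcntLT_brenLT t (x + 1) (upr_injective h)
  | .mabs c, _, x, h => by simpa only [brenLT, bcntLT] using bcntLC_brenLC c x h
theorem bcntLC_brenLC : ∀ (c : BCm) {ξ : ℕ → ℕ} (x), Function.Injective ξ →
    bcntLC (ξ x) (brenLC ξ c) = bcntLC x c
  | .cut t e, _, x, h => by
      simp only [brenLC, bcntLC, bcntLT_brenLT t x h, bcntLE_brenLE e x h]
theorem bcntLE_brenLE : ∀ (e : BCt) {ξ : ℕ → ℕ} (x), Function.Injective ξ →
    bcntLE (ξ x) (brenLE ξ e) = bcntLE x e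
  | .cvar _, _, _, _ => rfl
  | .cons t e, _, x, h => by
      simp only [brenLE, bcntLE, bcntLT_brenLT t x h, bcntLE_brenLE e x h]
  | .tmu c, ξ, x, h => by
      simpa only [brenLE, bcntLE, upr] using bcntLC_brenLC c (x + 1) (upr_injective h)
end

mutual
theorem bcntMT_brenMT : ∀ (t : BTm) {ξ : ℕ → ℕ} (a), Function.Injective ξ →
    bcntMT (ξ a) (brenMT ξ t) = bcntMT a t
  | .var _, _, _, _ => rfl
  | .abs t, _, a, h => by simpa only [brenMT, bcntMT] using bcntMT_brenMT t a h
  | .mabs c, ξ, a, h => by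
      simpa only [brenMT, bcntMT, upr] using bcntMC_brenMC c (a + 1) (upr_injective h)
theorem bcntMC_brenMC : ∀ (c : BCm) {ξ : ℕ → ℕ} (a), Function.Injective ξ →
    bcntMC (ξ a) (brenMC ξ c) = bcntMC a c
  | .cut t e, _, a, h => by
      simp only [brenMC, bcntMC, bcntMT_brenMT t a h, bcntME_brenME e a h]
theorem bcntME_brenME : ∀ (e : BCt) {ξ : ℕ → ℕ} (a), Function.Injective ξ →
    bcntME (ξ a) (brenME ξ e) = bcntME a e
  | .cvar b, ξ, a, h => by
      simp only [brenME, bcntME, h.eq_iff]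
  | .cons t e, _, a, h => by
      simp only [brenME, bcntME, bcntMT_brenMT t a h, bcntME_brenME e a h]
  | .tmu c, _, a, h => by simpa only [brenME, bcntME] using bcntMC_brenMC c a h
end

mutual
theorem bcntLT_brenMT : ∀ (t : BTm) (ξ : ℕ → ℕ) (x), bcntLT x (brenMT ξ t) = bcntLT x t
  | .var _, _, _ => rfl
  | .abs t, ξ, x => by simp only [brenMT, bcntLT, bcntLT_brenMT t]
  | .mabs c, ξ, x => by simp only [brenMT, bcntLT, bcntLC_brenMC c]
theorem bcntLC_brenMC : ∀ (c : BCm) (ξ : ℕ → ℕ) (x), bcntLC x (brenMC ξ c) = bcntLC x c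
  | .cut t e, ξ, x => by simp only [brenMC, bcntLC, bcntLT_brenMT t, bcntLE_brenME e]
theorem bcntLE_brenME : ∀ (e : BCt) (ξ : ℕ → ℕ) (x), bcntLE x (brenME ξ e) = bcntLE x e
  | .cvar _, _, _ => rfl
  | .cons t e, ξ, x => by simp only [brenME, bcntLE, bcntLT_brenMT t, bcntLE_brenME e]
  | .tmu c, ξ, x => by simp only [brenME, bcntLE, bcntLC_brenMC c]
end

mutual
theorem bcntMT_brenLT : ∀ (t : BTm) (ξ : ℕ → ℕ) (a), bcntMT a (brenLT ξ t) = bcntMT a t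
  | .var _, _, _ => rfl
  | .abs t, ξ, a => by simp only [brenLT, bcntMT, bcntMT_brenLT t]
  | .mabs c, ξ, a => by simp only [brenLT, bcntMT, bcntMC_brenLC c]
theorem bcntMC_brenLC : ∀ (c : BCm) (ξ : ℕ → ℕ) (a), bcntMC a (brenLC ξ c) = bcntMC a c
  | .cut t e, ξ, a => by simp only [brenLC, bcntMC, bcntMT_brenLT t, bcntME_brenLE e]
theorem bcntME_brenLE : ∀ (e : BCt) (ξ : ℕ → ℕ) (a), bcntME a (brenLE ξ e) = bcntME a e
  | .cvar _, _, _ => rfl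
  | .cons t e, ξ, a => by simp only [brenLE, bcntME, bcntMT_brenLT t, bcntME_brenLE e]
  | .tmu c, ξ, a => by simp only [brenLE, bcntME, bcntMC_brenLC c]
end

mutual
theorem bcntLT_brenLT_eq_zero : ∀ (t : BTm) {ξ : ℕ → ℕ} {x}, (∀ y, ξ y ≠ x) →
    bcntLT x (brenLT ξ t) = 0
  | .var y, _, _, h => by simp only [brenLT, bcntLT, if_neg (h y)]
  | .abs t, _, _, h => bcntLT_brenLT_eq_zero t (upr_ne_succ h)
  | .mabs c, _, _, h => bcntLC_brenLC_eq_zero c h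
theorem bcntLC_brenLC_eq_zero : ∀ (c : BCm) {ξ : ℕ → ℕ} {x}, (∀ y, ξ y ≠ x) →
    bcntLC x (brenLC ξ c) = 0
  | .cut t e, _, _, h => by
      simp only [brenLC, bcntLC, bcntLT_brenLT_eq_zero t h, bcntLE_brenLE_eq_zero e h]
theorem bcntLE_brenLE_eq_zero : ∀ (e : BCt) {ξ : ℕ → ℕ} {x}, (∀ y, ξ y ≠ x) →
    bcntLE x (brenLE ξ e) = 0
  | .cvar _, _, _, _ => rfl
  | .cons t e, _, _, h => by
      simp only [brenLE, bcntLE, bcntLT_brenLT_eq_zero t h, bcntLE_brenLE_eq_zero e h]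
  | .tmu c, _, _, h => bcntLC_brenLC_eq_zero c (upr_ne_succ h)
end

mutual
theorem bcntMT_brenMT_eq_zero : ∀ (t : BTm) {ξ : ℕ → ℕ} {a}, (∀ y, ξ y ≠ a) →
    bcntMT a (brenMT ξ t) = 0
  | .var _, _, _, _ => rfl
  | .abs t, _, _, h => bcntMT_brenMT_eq_zero t h
  | .mabs c, _, _, h => bcntMC_brenMC_eq_zero c (upr_ne_succ h)
theorem bcntMC_brenMC_eq_zero : ∀ (c : BCm) {ξ : ℕ → ℕ} {a}, (∀ y, ξ y ≠ a) →
    bcntMC a (brenMC ξ c) = 0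
  | .cut t e, _, _, h => by
      simp only [brenMC, bcntMC, bcntMT_brenMT_eq_zero t h, bcntME_brenME_eq_zero e h]
theorem bcntME_brenME_eq_zero : ∀ (e : BCt) {ξ : ℕ → ℕ} {a}, (∀ y, ξ y ≠ a) →
    bcntME a (brenME ξ e) = 0
  | .cvar b, _, _, h => by simp only [brenME, bcntME, if_neg (h b)]
  | .cons t e, _, _, h => by
      simp only [brenME, bcntME, bcntMT_brenMT_eq_zero t h, bcntME_brenME_eq_zero e h]
  | .tmu c, _, _, h => bcntMC_brenMC_eq_zero c h
end

theorem IsStk.renL {s : BCt} (h : IsStk s) (ξ : ℕ → ℕ) : IsStk (brenLE ξ s) := by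
  induction h with
  | cvar a => exact .cvar a
  | cons t _ ih => exact .cons _ ih

theorem IsStk.renM {s : BCt} (h : IsStk s) (ξ : ℕ → ℕ) : IsStk (brenME ξ s) := by
  induction h with
  | cvar a => exact .cvar _
  | cons t _ ih => exact .cons _ ih

theorem BRootT.renL {t t' : BTm} (ξ : ℕ → ℕ) : BRootT t t' → BRootT (brenLT ξ t) (brenLT ξ t')
  | .theta w => by
    simp only [brenLT, brenLC, brenLE, brenLT_brenMT]
    exact .theta _

theorem BRootT.renM {t t' : BTm} (ξ : ℕ → ℕ) : BRootT t t' → BRootT (brenMT ξ t) (brenMT ξ t')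
  | .theta w => by
    simp only [brenMT, brenMC, brenME, brenMT_brenMT, upr]
    rw [← brenMT_brenMT w Nat.succ ξ]
    exact .theta _

theorem brenLE_bsub0M (s : BCt) (ξ : ℕ → ℕ) :
    (fun k => brenLE ξ (bsub0M s k)) = bsub0M (brenLE ξ s) :=
  funext fun k => by cases k <;> rfl

theorem brenLT_bsub0L (t : BTm) (ξ : ℕ → ℕ) :
    (fun k => brenLT ξ (bsub0L t k)) = fun k => bsub0L (brenLT ξ t) (upr ξ k) :=
  funext fun k => by cases k <;> rfl

theorem brenME_bsub0M (s : BCt) (ξ : ℕ → ℕ) :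
    (fun k => brenME ξ (bsub0M s k)) = fun k => bsub0M (brenME ξ s) (upr ξ k) :=
  funext fun k => by cases k <;> rfl

theorem brenMT_bsub0L (t : BTm) (ξ : ℕ → ℕ) :
    (fun k => brenMT ξ (bsub0L t k)) = bsub0L (brenMT ξ t) :=
  funext fun k => by cases k <;> rfl

theorem brenLC_beta_reduct (ξ : ℕ → ℕ) (u t : BTm) (e : BCt) :
    brenLC ξ (.cut t (.tmu (.cut u (brenLE Nat.succ e))))
      = .cut (brenLT ξ t) (.tmu (.cut (brenLT (upr ξ) u)
          (brenLE Nat.succ (brenLE ξ e)))) := by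
  simp only [brenLC, brenLE, brenLE_brenLE, upr_comp_succ]

theorem brenMC_beta_reduct (ξ : ℕ → ℕ) (u t : BTm) (e : BCt) :
    brenMC ξ (.cut t (.tmu (.cut u (brenLE Nat.succ e))))
      = .cut (brenMT ξ t) (.tmu (.cut (brenMT ξ u)
          (brenLE Nat.succ (brenME ξ e)))) := by
  simp only [brenMC, brenME, brenLE_brenME]

theorem brenLC_mun_reduct (ξ : ℕ → ℕ) (c : BCm) (s : BCt) :
    brenLC ξ (bmsubC (bsub0M s) c) = bmsubC (bsub0M (brenLE ξ s)) (brenLC ξ c) := by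
  rw [brenLC_bmsubC, brenLE_bsub0M]

theorem brenMC_mun_reduct (ξ : ℕ → ℕ) (c : BCm) (s : BCt) :
    brenMC ξ (bmsubC (bsub0M s) c)
      = bmsubC (bsub0M (brenME ξ s)) (brenMC (upr ξ) c) := by
  rw [brenMC_bmsubC, brenME_bsub0M, bmsubC_brenMC]

theorem brenLC_mutilde_reduct (ξ : ℕ → ℕ) (t : BTm) (c : BCm) :
    brenLC ξ (blsubC (bsub0L t) c) = blsubC (bsub0L (brenLT ξ t)) (brenLC (upr ξ) c) := by
  rw [brenLC_blsubC, brenLT_bsub0L, blsubC_brenLC]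

theorem brenMC_mutilde_reduct (ξ : ℕ → ℕ) (t : BTm) (c : BCm) :
    brenMC ξ (blsubC (bsub0L t) c) = blsubC (bsub0L (brenMT ξ t)) (brenMC ξ c) := by
  rw [brenMC_blsubC, brenMT_bsub0L]

theorem BRootCn.renL {c c' : BCm} (ξ : ℕ → ℕ) :
    BRootCn c c' → BRootCn (brenLC ξ c) (brenLC ξ c')
  | .beta u t e => by rw [brenLC_beta_reduct]; exact .beta _ _ _
  | .mun c s hs => by rw [brenLC_mun_reduct]; exact .mun _ _ (hs.renL ξ)
  | .mutilde t c => by rw [brenLC_mutilde_reduct]; exact .mutilde _ _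

theorem BRootCn.renM {c c' : BCm} (ξ : ℕ → ℕ) :
    BRootCn c c' → BRootCn (brenMC ξ c) (brenMC ξ c')
  | .beta u t e => by rw [brenMC_beta_reduct]; exact .beta _ _ _
  | .mun c s hs => by rw [brenMC_mun_reduct]; exact .mun _ _ (hs.renM ξ)
  | .mutilde t c => by rw [brenMC_mutilde_reduct]; exact .mutilde _ _

theorem BRootCnlin.renL {c c' : BCm} {ξ : ℕ → ℕ} (hξ : Function.Injective ξ) :
    BRootCnlin c c' → BRootCnlin (brenLC ξ c) (brenLC ξ c')
  | .beta u t e => by rw [brenLC_beta_reduct]; exact .beta _ _ _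
  | .mun c s hs hlin => by
      rw [brenLC_mun_reduct]
      refine .mun _ _ (hs.renL ξ) ?_
      rcases hlin with ⟨a, rfl⟩ | hcnt
      · exact .inl ⟨a, rfl⟩
      · exact .inr (by rw [bcntMC_brenLC, hcnt])
  | .mutilde t c hlin => by
      rw [brenLC_mutilde_reduct]
      refine .mutilde _ _ ?_
      rcases hlin with ⟨x, rfl⟩ | hcnt
      · exact .inl ⟨ξ x, rfl⟩
      · exact .inr ((bcntLC_brenLC c 0 (upr_injective hξ)).trans hcnt)

theorem BRootCnlin.renM {c c' : BCm} {ξ : ℕ → ℕ} (hξ : Function.Injective ξ) :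
    BRootCnlin c c' → BRootCnlin (brenMC ξ c) (brenMC ξ c')
  | .beta u t e => by rw [brenMC_beta_reduct]; exact .beta _ _ _
  | .mun c s hs hlin => by
      rw [brenMC_mun_reduct]
      refine .mun _ _ (hs.renM ξ) ?_
      rcases hlin with ⟨a, rfl⟩ | hcnt
      · exact .inl ⟨ξ a, rfl⟩
      · exact .inr ((bcntMC_brenMC c 0 (upr_injective hξ)).trans hcnt)
  | .mutilde t c hlin => by
      rw [brenMC_mutilde_reduct]
      refine .mutilde _ _ ?_
      rcases hlin with ⟨x, rfl⟩ | hcnt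
      · exact .inl ⟨x, rfl⟩
      · exact .inr (by rw [bcntLC_brenMC, hcnt])

section

variable {R1 : BTm → BTm → Prop} {R2 : BCm → BCm → Prop}

mutual
theorem JT.renL
    (h1 : ∀ {ξ : ℕ → ℕ}, Function.Injective ξ → ∀ {t t'}, R1 t t' → R1 (brenLT ξ t) (brenLT ξ t'))
    (h2 : ∀ {ξ : ℕ → ℕ}, Function.Injective ξ → ∀ {c c'}, R2 c c' → R2 (brenLC ξ c) (brenLC ξ c')) :
    ∀ {ξ : ℕ → ℕ}, Function.Injective ξ → ∀ {t t'},
      JT R1 R2 t t' → JT R1 R2 (brenLT ξ t) (brenLT ξ t')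
  | _, hξ, _, _, .root h => .root (h1 hξ h)
  | _, hξ, _, _, .absC h => .absC (JT.renL h1 h2 (upr_injective hξ) h)
  | _, hξ, _, _, .mabsC h => .mabsC (JC.renL h1 h2 hξ h)
theorem JC.renL
    (h1 : ∀ {ξ : ℕ → ℕ}, Function.Injective ξ → ∀ {t t'}, R1 t t' → R1 (brenLT ξ t) (brenLT ξ t'))
    (h2 : ∀ {ξ : ℕ → ℕ}, Function.Injective ξ → ∀ {c c'}, R2 c c' → R2 (brenLC ξ c) (brenLC ξ c')) :
    ∀ {ξ : ℕ → ℕ}, Function.Injective ξ → ∀ {c c'},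
      JC R1 R2 c c' → JC R1 R2 (brenLC ξ c) (brenLC ξ c')
  | _, hξ, _, _, .root h => .root (h2 hξ h)
  | _, hξ, _, _, .cutL _ h => .cutL _ (JT.renL h1 h2 hξ h)
  | _, hξ, _, _, .cutR _ h => .cutR _ (JE.renL h1 h2 hξ h)
theorem JE.renL
    (h1 : ∀ {ξ : ℕ → ℕ}, Function.Injective ξ → ∀ {t t'}, R1 t t' → R1 (brenLT ξ t) (brenLT ξ t'))
    (h2 : ∀ {ξ : ℕ → ℕ}, Function.Injective ξ → ∀ {c c'}, R2 c c' → R2 (brenLC ξ c) (brenLC ξ c')) :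
    ∀ {ξ : ℕ → ℕ}, Function.Injective ξ → ∀ {e e'},
      JE R1 R2 e e' → JE R1 R2 (brenLE ξ e) (brenLE ξ e')
  | _, hξ, _, _, .consL _ h => .consL _ (JT.renL h1 h2 hξ h)
  | _, hξ, _, _, .consR _ h => .consR _ (JE.renL h1 h2 hξ h)
  | _, hξ, _, _, .tmuC h => .tmuC (JC.renL h1 h2 (upr_injective hξ) h)
end

mutual
theorem JT.renM
    (h1 : ∀ {ξ : ℕ → ℕ}, Function.Injective ξ → ∀ {t t'}, R1 t t' → R1 (brenMT ξ t) (brenMT ξ t'))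
    (h2 : ∀ {ξ : ℕ → ℕ}, Function.Injective ξ → ∀ {c c'}, R2 c c' → R2 (brenMC ξ c) (brenMC ξ c')) :
    ∀ {ξ : ℕ → ℕ}, Function.Injective ξ → ∀ {t t'},
      JT R1 R2 t t' → JT R1 R2 (brenMT ξ t) (brenMT ξ t')
  | _, hξ, _, _, .root h => .root (h1 hξ h)
  | _, hξ, _, _, .absC h => .absC (JT.renM h1 h2 hξ h)
  | _, hξ, _, _, .mabsC h => .mabsC (JC.renM h1 h2 (upr_injective hξ) h)
theorem JC.renM
    (h1 : ∀ {ξ : ℕ → ℕ}, Function.Injective ξ → ∀ {t t'}, R1 t t' → R1 (brenMT ξ t) (brenMT ξ t'))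
    (h2 : ∀ {ξ : ℕ → ℕ}, Function.Injective ξ → ∀ {c c'}, R2 c c' → R2 (brenMC ξ c) (brenMC ξ c')) :
    ∀ {ξ : ℕ → ℕ}, Function.Injective ξ → ∀ {c c'},
      JC R1 R2 c c' → JC R1 R2 (brenMC ξ c) (brenMC ξ c')
  | _, hξ, _, _, .root h => .root (h2 hξ h)
  | _, hξ, _, _, .cutL _ h => .cutL _ (JT.renM h1 h2 hξ h)
  | _, hξ, _, _, .cutR _ h => .cutR _ (JE.renM h1 h2 hξ h)
theorem JE.renM
    (h1 : ∀ {ξ : ℕ → ℕ}, Function.Injective ξ → ∀ {t t'}, R1 t t' → R1 (brenMT ξ t) (brenMT ξ t'))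
    (h2 : ∀ {ξ : ℕ → ℕ}, Function.Injective ξ → ∀ {c c'}, R2 c c' → R2 (brenMC ξ c) (brenMC ξ c')) :
    ∀ {ξ : ℕ → ℕ}, Function.Injective ξ → ∀ {e e'},
      JE R1 R2 e e' → JE R1 R2 (brenME ξ e) (brenME ξ e')
  | _, hξ, _, _, .consL _ h => .consL _ (JT.renM h1 h2 hξ h)
  | _, hξ, _, _, .consR _ h => .consR _ (JE.renM h1 h2 hξ h)
  | _, hξ, _, _, .tmuC h => .tmuC (JC.renM h1 h2 hξ h)
end

theorem star_abs {t t' : BTm} (h : Star (JT R1 R2) t t') :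
    Star (JT R1 R2) (.abs t) (.abs t') :=
  Relation.ReflTransGen.lift _ (fun _ _ h => JT.absC h) _ _ h

theorem star_mabs {c c' : BCm} (h : Star (JC R1 R2) c c') :
    Star (JT R1 R2) (.mabs c) (.mabs c') :=
  Relation.ReflTransGen.lift _ (fun _ _ h => JT.mabsC h) _ _ h

theorem star_cutL {t t' : BTm} (e : BCt) (h : Star (JT R1 R2) t t') :
    Star (JC R1 R2) (.cut t e) (.cut t' e) :=
  Relation.ReflTransGen.lift (fun x => BCm.cut x e) (fun _ _ h => JC.cutL e h) _ _ h

end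

theorem BStepNT.renL {ξ : ℕ → ℕ} (hξ : Function.Injective ξ) {t t' : BTm} :
    BStepNT t t' → BStepNT (brenLT ξ t) (brenLT ξ t') :=
  JT.renL (fun _ => BRootT.renL _) (fun _ => BRootCn.renL _) hξ

theorem BStepNT.renM {ξ : ℕ → ℕ} (hξ : Function.Injective ξ) {t t' : BTm} :
    BStepNT t t' → BStepNT (brenMT ξ t) (brenMT ξ t') :=
  JT.renM (fun _ => BRootT.renM _) (fun _ => BRootCn.renM _) hξ

theorem LBStepNT.renL {ξ : ℕ → ℕ} (hξ : Function.Injective ξ) {t t' : BTm} :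
    LBStepNT t t' → LBStepNT (brenLT ξ t) (brenLT ξ t') :=
  JT.renL (fun _ => BRootT.renL _) (fun {_} hξ {_ _} h => BRootCnlin.renL hξ h) hξ

theorem LBStepNT.renM {ξ : ℕ → ℕ} (hξ : Function.Injective ξ) {t t' : BTm} :
    LBStepNT t t' → LBStepNT (brenMT ξ t) (brenMT ξ t') :=
  JT.renM (fun _ => BRootT.renM _) (fun {_} hξ {_ _} h => BRootCnlin.renM hξ h) hξ

/-- `μβ.⟨v | μ̃y.⟨u | y · β⟩⟩`, so that `(u v)† = dagApp u† v†`. -/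
def dagApp (u v : BTm) : BTm :=
  .mabs (.cut (brenMT Nat.succ v)
    (.tmu (.cut (brenLT Nat.succ (brenMT Nat.succ u)) (.cons (.var 0) (.cvar 0)))))

theorem dagT_app (u v : Tm) : dagT (.app u v) = dagApp (dagT u) (dagT v) := rfl

theorem brenLT_dagApp (ξ : ℕ → ℕ) (u v : BTm) :
    brenLT ξ (dagApp u v) = dagApp (brenLT ξ u) (brenLT ξ v) := by
  simp only [dagApp, brenLT, brenLC, brenLE, brenLT_brenMT, brenLT_brenLT, upr]

theorem brenMT_dagApp (ξ : ℕ → ℕ) (u v : BTm) :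
    brenMT ξ (dagApp u v) = dagApp (brenMT ξ u) (brenMT ξ v) := by
  simp only [dagApp, brenMT, brenMC, brenME, brenLT_brenMT, brenMT_brenMT, upr]

theorem blsubT_dagApp (σ : ℕ → BTm) (u v : BTm) :
    blsubT σ (dagApp u v) = dagApp (blsubT σ u) (blsubT σ v) := by
  simp only [dagApp, blsubT, blsubC, blsubE, brenMT_blsubT, brenLT_blsubT, blsubT_brenLT, bupsL]

theorem bmsubT_dagApp (σ : ℕ → BCt) (u v : BTm) :
    bmsubT σ (dagApp u v) = dagApp (bmsubT σ u) (bmsubT σ v) := by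
  simp only [dagApp, bmsubT, bmsubC, bmsubE, bmsubT_brenMT, bupsM, brenMT_bmsubT,
    brenLT_bmsubT, brenLT_brenMT, brenLE_brenME, brenLE]

mutual
theorem dagT_renLT : ∀ (t : Tm) (ξ : ℕ → ℕ), dagT (renLT ξ t) = brenLT ξ (dagT t)
  | .var _, _ => rfl
  | .abs t, ξ => by simp only [renLT, dagT, brenLT, dagT_renLT t]
  | .app u v, ξ => by simp only [renLT, dagT_app, brenLT_dagApp, dagT_renLT u, dagT_renLT v]
  | .mabs c, ξ => by simp only [renLT, dagT, brenLT, dagC_renLC c]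
theorem dagC_renLC : ∀ (c : Cm) (ξ : ℕ → ℕ), dagC (renLC ξ c) = brenLC ξ (dagC c)
  | .cmd a t, ξ => by simp only [renLC, dagC, brenLC, brenLE, dagT_renLT t]
end

mutual
theorem dagT_renMT : ∀ (t : Tm) (ξ : ℕ → ℕ), dagT (renMT ξ t) = brenMT ξ (dagT t)
  | .var _, _ => rfl
  | .abs t, ξ => by simp only [renMT, dagT, brenMT, dagT_renMT t]
  | .app u v, ξ => by simp only [renMT, dagT_app, brenMT_dagApp, dagT_renMT u, dagT_renMT v]
  | .mabs c, ξ => by simp only [renMT, dagT, brenMT, dagC_renMC c]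
theorem dagC_renMC : ∀ (c : Cm) (ξ : ℕ → ℕ), dagC (renMC ξ c) = brenMC ξ (dagC c)
  | .cmd a t, ξ => by simp only [renMC, dagC, brenMC, brenME, dagT_renMT t]
end

theorem dagE_renLE (e : Ct) (ξ : ℕ → ℕ) : dagE (renLE ξ e) = brenLE ξ (dagE e) := by
  induction e with
  | cvar a => rfl
  | push b t =>
      simp only [renLE, dagE, brenLE, brenLC, brenLT, dagT_renLT, brenLT_brenLT, upr]
  | cons e t ih => simp only [renLE, dagE, brenLE, dagT_renLT, ih]

theorem dagE_renME (e : Ct) (ξ : ℕ → ℕ) : dagE (renME ξ e) = brenME ξ (dagE e) := by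
  induction e with
  | cvar a => rfl
  | push b t => simp only [renME, dagE, brenME, brenMC, brenMT, dagT_renMT, brenLT_brenMT]
  | cons e t ih => simp only [renME, dagE, brenME, dagT_renMT, ih]

theorem dagT_upsL (σ : ℕ → Tm) : (fun k => dagT (upsL σ k)) = bupsL fun k => dagT (σ k) :=
  funext fun k => by
    cases k with
    | zero => rfl
    | succ k => simp only [upsL, bupsL, dagT_renLT]

mutual
theorem dagT_lsubT : ∀ (t : Tm) (σ : ℕ → Tm),
    dagT (lsubT σ t) = blsubT (fun k => dagT (σ k)) (dagT t)
  | .var _, _ => rfl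
  | .abs t, σ => by simp only [lsubT, dagT, blsubT, dagT_lsubT t, dagT_upsL]
  | .app u v, σ => by simp only [lsubT, dagT_app, blsubT_dagApp, dagT_lsubT u, dagT_lsubT v]
  | .mabs c, σ => by simp only [lsubT, dagT, blsubT, dagC_lsubC c, dagT_renMT]
theorem dagC_lsubC : ∀ (c : Cm) (σ : ℕ → Tm),
    dagC (lsubC σ c) = blsubC (fun k => dagT (σ k)) (dagC c)
  | .cmd a t, σ => by simp only [lsubC, dagC, blsubC, blsubE, dagT_lsubT t]
end

theorem star_dagApp {R1 : BTm → BTm → Prop} {R2 : BCm → BCm → Prop}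
    (hL : ∀ {t t'}, JT R1 R2 t t' → JT R1 R2 (brenLT Nat.succ t) (brenLT Nat.succ t'))
    (hM : ∀ {t t'}, JT R1 R2 t t' → JT R1 R2 (brenMT Nat.succ t) (brenMT Nat.succ t'))
    {u u' v v' : BTm} (hu : Star (JT R1 R2) u u') (hv : Star (JT R1 R2) v v') :
    Star (JT R1 R2) (dagApp u v) (dagApp u' v') :=
  (Relation.ReflTransGen.lift (dagApp u) (fun _ _ h => JT.mabsC (JC.cutL _ (hM h))) _ _ hv).trans
    (Relation.ReflTransGen.lift (dagApp · v')
      (fun _ _ h => JT.mabsC (JC.cutR _ (JE.tmuC (JC.cutL _ (hL (hM h)))))) _ _ hu)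

theorem JC.root_of_eq {R1 : BTm → BTm → Prop} {R2 : BCm → BCm → Prop} {c c' c'' : BCm}
    (h : R2 c c') (e : c' = c'') : JC R1 R2 c c'' :=
  e ▸ .root h

theorem dagApp_mutilde (u v : BTm) :
    BStepNT (dagApp u v) (.mabs (.cut (brenMT Nat.succ u) (.cons (brenMT Nat.succ v) (.cvar 0)))) :=
  .mabsC <| JC.root_of_eq (BRootCn.mutilde _ _) <| by
    simp only [blsubC, blsubE, blsubT, bsub0L.eq_1]
    rw [blsubT_brenLT_succ]
    exact fun _ => rfl

theorem cut_dagApp_stk_lin {s : BCt} (hs : IsStk s) (u v : BTm) :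
    Star LBStepNC (.cut (dagApp u v) s) (.cut u (.cons v s)) := by
  have hcntM : bcntMC 0 (.cut (brenMT Nat.succ v)
      (.tmu (.cut (brenLT Nat.succ (brenMT Nat.succ u)) (.cons (.var 0) (.cvar 0))))) = 1 := by
    simp [bcntMC, bcntMT, bcntME, bcntMT_brenLT,
      bcntMT_brenMT_eq_zero _ (ξ := Nat.succ) (a := 0) Nat.succ_ne_zero]
  have hcntL : bcntLC 0 (.cut (brenLT Nat.succ u) (.cons (.var 0) (brenLE Nat.succ s))) = 1 := by
    simp [bcntLC, bcntLT, bcntLE, bcntLT_brenLT_eq_zero _ (ξ := Nat.succ) (x := 0) Nat.succ_ne_zero,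
      bcntLE_brenLE_eq_zero _ (ξ := Nat.succ) (x := 0) Nat.succ_ne_zero]
  refine .head (b := .cut v (.tmu (.cut (brenLT Nat.succ u) (.cons (.var 0) (brenLE Nat.succ s)))))
    (JC.root_of_eq (BRootCnlin.mun _ s hs (.inr hcntM)) ?_)
    (.single (JC.root_of_eq (BRootCnlin.mutilde _ _ (.inr hcntL)) ?_))
  · simp only [bmsubC, bmsubE, bmsubT, brenLT_brenMT, bsub0M.eq_1]
    rw [bmsubT_brenMT_succ, bmsubT_brenMT_succ] <;> exact fun _ => rfl
  · simp only [blsubC, blsubE, blsubT, bsub0L.eq_1]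
    rw [blsubT_brenLT_succ, blsubE_brenLE_succ] <;> exact fun _ => rfl

inductive IsCtStk : Ct → Prop
  | cvar (a : ℕ) : IsCtStk (.cvar a)
  | cons {e : Ct} (t : Tm) : IsCtStk e → IsCtStk (.cons e t)

theorem IsCtStk.renLE {e : Ct} (h : IsCtStk e) (ξ : ℕ → ℕ) : IsCtStk (renLE ξ e) := by
  induction h with
  | cvar a => exact .cvar a
  | cons t _ ih => exact .cons _ ih

theorem IsCtStk.renME {e : Ct} (h : IsCtStk e) (ξ : ℕ → ℕ) : IsCtStk (renME ξ e) := by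
  induction h with
  | cvar a => exact .cvar _
  | cons t _ ih => exact .cons _ ih

theorem IsCtStk.dagE {e : Ct} (h : IsCtStk e) : IsStk (dagE e) := by
  induction h with
  | cvar a => exact .cvar a
  | cons t _ ih => exact .cons _ ih

theorem IsCtStk.upsM {σ : ℕ → Ct} (hσ : ∀ k, IsCtStk (σ k)) : ∀ k, IsCtStk (upsM σ k)
  | 0 => .cvar 0
  | k + 1 => (hσ k).renME _

theorem IsCtStk.sub0M {e : Ct} (he : IsCtStk e) : ∀ k, IsCtStk (sub0M e k)
  | 0 => he
  | k + 1 => .cvar k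

theorem IsCtStk.sub1M {e : Ct} (he : IsCtStk e) : ∀ k, IsCtStk (sub1M 0 e k)
  | 0 => he
  | k + 1 => .cvar (k + 1)

theorem dagE_upsM (σ : ℕ → Ct) : (fun k => dagE (upsM σ k)) = bupsM fun k => dagE (σ k) :=
  funext fun k => by
    cases k with
    | zero => rfl
    | succ k => simp only [upsM, bupsM, dagE_renME]

theorem dagE_sub0M (e : Ct) : (fun k => dagE (sub0M e k)) = bsub0M (dagE e) :=
  funext fun k => by cases k <;> rfl

theorem dagE_sub1M (e : Ct) : (fun k => dagE (sub1M 0 e k)) = bsub1M 0 (dagE e) :=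
  funext fun k => by cases k <;> rfl

theorem dagC_fill_lin {e : Ct} (he : IsCtStk e) (t : Tm) :
    Star LBStepNC (dagC (fill e t)) (.cut (dagT t) (dagE e)) := by
  induction he generalizing t with
  | cvar a => exact .refl
  | cons u he ih => exact (ih (.app t u)).trans (cut_dagApp_stk_lin he.dagE _ _)

mutual
theorem dagT_msubT_lin : ∀ (t : Tm) {σ : ℕ → Ct}, (∀ k, IsCtStk (σ k)) →
    Star LBStepNT (dagT (msubT σ t)) (bmsubT (fun k => dagE (σ k)) (dagT t))
  | .var _, _, _ => .refl
  | .abs t, σ, hσ => by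
      have ih := dagT_msubT_lin t fun k => (hσ k).renLE Nat.succ
      simp only [dagE_renLE] at ih
      exact star_abs ih
  | .app u v, σ, hσ => by
      rw [msubT, dagT_app, dagT_app, bmsubT_dagApp]
      exact star_dagApp (LBStepNT.renL Nat.succ_injective) (LBStepNT.renM Nat.succ_injective)
        (dagT_msubT_lin u hσ) (dagT_msubT_lin v hσ)
  | .mabs c, σ, hσ => by
      have ih := dagC_msubC_lin c (IsCtStk.upsM hσ)
      rw [dagE_upsM] at ih
      exact star_mabs ih
theorem dagC_msubC_lin : ∀ (c : Cm) {σ : ℕ → Ct}, (∀ k, IsCtStk (σ k)) →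
    Star LBStepNC (dagC (msubC σ c)) (bmsubC (fun k => dagE (σ k)) (dagC c))
  | .cmd a t, σ, hσ => (dagC_fill_lin (hσ a) (msubT σ t)).trans (star_cutL _ (dagT_msubT_lin t hσ))
end

theorem dagT_sub0L (t : Tm) : (fun k => dagT (sub0L t k)) = bsub0L (dagT t) :=
  funext fun k => by cases k <;> rfl

theorem bsub0M_comp_upr_succ (s : BCt) : (fun k => bsub0M s (upr Nat.succ k)) = bsub1M 0 s :=
  funext fun k => by cases k <;> rfl

theorem dagT_beta_reduces (u t : Tm) :
    Star BStepNT (dagT (.app (.abs u) t)) (dagT (lsubT (sub0L t) u)) := by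
  rw [dagT_lsubT, dagT_sub0L]
  refine .head (dagApp_mutilde _ _) (.head (.mabsC (.root (.beta _ _ _))) (.head
    (.mabsC (JC.root_of_eq (.mutilde _ _) ?_)) (.single (.root (.theta _)))))
  rw [blsubC, brenMT_blsubT, brenMT_bsub0L]
  rfl

theorem dagT_mu_reduces (c : Cm) (t : Tm) :
    Star BStepNT (dagT (.app (.mabs c) t))
      (.mabs (bmsubC (bsub1M 0 (dagE (.cons (.cvar 0) (renMT Nat.succ t)))) (dagC c))) :=
  .head (dagApp_mutilde _ _)
    (.single (.mabsC (JC.root_of_eq (.mun _ _ (.cons _ (.cvar 0))) (by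
      rw [bmsubC_brenMC, bsub0M_comp_upr_succ, dagE, dagT_renMT]
      rfl))))

theorem dagT_theta_step (t : Tm) : BStepNT (dagT (.mabs (.cmd 0 (renMT Nat.succ t)))) (dagT t) := by
  rw [dagT, dagC, dagT_renMT]
  exact .root (.theta _)

theorem dagC_rho_step (b : ℕ) (c : Cm) :
    BStepNC (dagC (.cmd b (.mabs c))) (bmsubC (bsub0M (.cvar b)) (dagC c)) :=
  .root (.mun _ _ (.cvar b))

mutual
theorem exists_join_of_stepNT : ∀ {t v : Tm}, StepNT t v →
    ∃ u : BTm, Star BStepNT (dagT t) u ∧ Star LBStepNT (dagT v) u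
  | _, _, .root (.beta u t) => ⟨_, dagT_beta_reduces u t, .refl⟩
  | _, _, .root (.mu c t) => by
      have h := dagC_msubC_lin c (IsCtStk.sub1M (.cons (renMT Nat.succ t) (.cvar 0)))
      rw [dagE_sub1M] at h
      exact ⟨_, dagT_mu_reduces c t, star_mabs h⟩
  | _, _, .root (.theta t) => ⟨_, .single (dagT_theta_step t), .refl⟩
  | _, _, .absC h =>
      let ⟨_, h₁, h₂⟩ := exists_join_of_stepNT h
      ⟨_, star_abs h₁, star_abs h₂⟩
  | _, _, .appL _ h =>
      let ⟨_, h₁, h₂⟩ := exists_join_of_stepNT h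
      ⟨_, star_dagApp (BStepNT.renL Nat.succ_injective) (BStepNT.renM Nat.succ_injective) h₁ .refl,
        star_dagApp (LBStepNT.renL Nat.succ_injective) (LBStepNT.renM Nat.succ_injective) h₂ .refl⟩
  | _, _, .appR _ h =>
      let ⟨_, h₁, h₂⟩ := exists_join_of_stepNT h
      ⟨_, star_dagApp (BStepNT.renL Nat.succ_injective) (BStepNT.renM Nat.succ_injective) .refl h₁,
        star_dagApp (LBStepNT.renL Nat.succ_injective) (LBStepNT.renM Nat.succ_injective) .refl h₂⟩
  | _, _, .mabsC h =>
      let ⟨_, h₁, h₂⟩ := exists_join_of_stepNC h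
      ⟨_, star_mabs h₁, star_mabs h₂⟩
theorem exists_join_of_stepNC : ∀ {c d : Cm}, StepNC c d →
    ∃ u : BCm, Star BStepNC (dagC c) u ∧ Star LBStepNC (dagC d) u
  | _, _, .root (.rho b c) => by
      have h := dagC_msubC_lin c (IsCtStk.sub0M (.cvar b))
      rw [dagE_sub0M] at h
      exact ⟨_, .single (dagC_rho_step b c), h⟩
  | _, _, .cmdC _ h =>
      let ⟨_, h₁, h₂⟩ := exists_join_of_stepNT h
      ⟨_, star_cutL _ h₁, star_cutL _ h₂⟩
end

/-- call-by-name simulation of λμ by λ̄μμ̃.  If `t` reduces to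
`v` by one call-by-name λμ-step, then there is `u` with `t† →n* u` and
`v† →lin-n* u`; and likewise for commands. -/
theorem cbn_lm_lmm_simulation :
    (∀ t v : Tm, StepNT t v →
      ∃ u : BTm, Star BStepNT (dagT t) u ∧ Star LBStepNT (dagT v) u) ∧
    (∀ c d : Cm, StepNC c d →
      ∃ u : BCm, Star BStepNC (dagC c) u ∧ Star LBStepNC (dagC d) u) :=
  ⟨fun _ _ => exists_join_of_stepNT, fun _ _ => exists_join_of_stepNC⟩

end CHSim
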